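/- Let α, β ∈ ℝ and define the polynomials Q3(t) = (4/3)t³ + α t² + (α²/4) t + β and Q4(t) = (4/3)t⁴ + (4/3)α t³ + (α²/2) t² + ((α³ − 16β)/8) t + (α⁴ − 32 α β)/64. Then on any open interval I ⊆ ℝ where Q3 > 0 and Q4 > 0, the pair f(t) = ln Q3(t), g(t) = ln Q4(t) satisfies the V1 truncated system (1/4)·f''(t) = −e^{g(t) − 2 f(t)} and (1/4)·g''(t) = −e^{−2 g(t) + 2 f(t)} for all t ∈ I. (This is the two-parameter family 'Set A' of explicit solutions.) -/

import Mathlib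

/-!
For positive `Q`, `(log Q)'' = (Q Q'' - Q'²) / Q²`, while `e^{g - 2f} = Q4 / Q3²`,
`e^{-2g + 2f} = Q3² / Q4²`. So the system is equivalent to the two polynomial identities
`Q3 Q3'' - Q3'² = -4 Q4` and `Q4 Q4'' - Q4'² = -4 Q3²`, which hold identically in `α`, `β`, `t`.
-/

open Real Filter Topology

lemma deriv_deriv_log_comp {Q Q' : ℝ → ℝ} {Q'' t : ℝ}
    (hQ : ∀ᶠ x in 𝓝 t, HasDerivAt Q (Q' x) x) (hQ' : HasDerivAt Q' Q'' t) (ht : Q t ≠ 0) :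
    deriv (deriv fun x => log (Q x)) t = (Q'' * Q t - Q' t * Q' t) / Q t ^ 2 := by
  have hne : ∀ᶠ x in 𝓝 t, Q x ≠ 0 :=
    hQ.self_of_nhds.continuousAt.eventually_ne ht
  have hderiv : deriv (fun x => log (Q x)) =ᶠ[𝓝 t] fun x => Q' x / Q x := by
    filter_upwards [hQ, hne] with x hx hx0
    exact (hx.log hx0).deriv
  rw [hderiv.deriv_eq]
  exact (hQ'.div hQ.self_of_nhds ht).deriv

lemma exp_two_mul_log {y : ℝ} (hy : 0 < y) : exp (2 * log y) = y ^ 2 := by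
  rw [← exp_log (pow_pos hy 2), log_pow]
  norm_num

lemma exp_sub_two_mul_log (x : ℝ) {y : ℝ} (hy : 0 < y) :
    exp (x - 2 * log y) = exp x / y ^ 2 := by
  rw [exp_sub, exp_two_mul_log hy]

noncomputable def setAQ3 (α β : ℝ) : ℝ → ℝ := fun t => (4/3) * t^3 + α * t^2 + (α^2/4) * t + β

noncomputable def setAQ4 (α β : ℝ) : ℝ → ℝ := fun t =>
  (4/3) * t^4 + (4/3) * α * t^3 + (α^2/2) * t^2 + ((α^3 - 16 * β)/8) * t + (α^4 - 32 * α * β)/64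

section

variable (α β t : ℝ)

lemma hasDerivAt_setAQ3 : HasDerivAt (setAQ3 α β) ((2 * t + α / 2) ^ 2) t := by
  refine ((((hasDerivAt_pow 3 t).const_mul (4/3)).add ((hasDerivAt_pow 2 t).const_mul α)).add
    ((hasDerivAt_id t).const_mul (α^2/4))).add_const β |>.congr_deriv ?_
  push_cast; ring

lemma hasDerivAt_setAQ3_deriv :
    HasDerivAt (fun x => (2 * x + α / 2) ^ 2) (4 * (2 * t + α / 2)) t := by
  refine (((hasDerivAt_id' t).const_mul 2).add_const (α / 2)).pow 2 |>.congr_deriv ?_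
  push_cast; ring

lemma hasDerivAt_setAQ4 :
    HasDerivAt (setAQ4 α β) ((16/3) * t^3 + 4 * α * t^2 + α^2 * t + (α^3 - 16 * β)/8) t := by
  refine (((((hasDerivAt_pow 4 t).const_mul (4/3)).add
    ((hasDerivAt_pow 3 t).const_mul ((4/3) * α))).add
    ((hasDerivAt_pow 2 t).const_mul (α^2/2))).add
    ((hasDerivAt_id t).const_mul ((α^3 - 16 * β)/8))).add_const ((α^4 - 32 * α * β)/64)
    |>.congr_deriv ?_
  push_cast; ring

lemma hasDerivAt_setAQ4_deriv :
    HasDerivAt (fun x => (16/3) * x^3 + 4 * α * x^2 + α^2 * x + (α^3 - 16 * β)/8)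
      ((4 * t + α) ^ 2) t := by
  refine ((((hasDerivAt_pow 3 t).const_mul (16/3)).add
    ((hasDerivAt_pow 2 t).const_mul (4 * α))).add
    ((hasDerivAt_id t).const_mul (α^2))).add_const ((α^3 - 16 * β)/8) |>.congr_deriv ?_
  push_cast; ring

lemma setAQ3_wronskian :
    4 * (2 * t + α / 2) * setAQ3 α β t - (2 * t + α / 2) ^ 2 * (2 * t + α / 2) ^ 2
      = -4 * setAQ4 α β t := by
  simp only [setAQ3, setAQ4]
  ring

lemma setAQ4_wronskian :
    (4 * t + α) ^ 2 * setAQ4 α β t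
      - ((16/3) * t^3 + 4 * α * t^2 + α^2 * t + (α^3 - 16 * β)/8)
        * ((16/3) * t^3 + 4 * α * t^2 + α^2 * t + (α^3 - 16 * β)/8)
      = -4 * setAQ3 α β t ^ 2 := by
  simp only [setAQ3, setAQ4]
  ring

end

/-- The two-parameter family "Set A" of explicit solutions of the V1 truncated system:
with `Q3(t) = (4/3)t³ + α t² + (α²/4)t + β` and
`Q4(t) = (4/3)t⁴ + (4/3)α t³ + (α²/2)t² + ((α³ − 16β)/8)t + (α⁴ − 32αβ)/64`,
the pair `f = ln Q3`, `g = ln Q4` solves `(1/4) f'' = −e^{g−2f}`, `(1/4) g'' = −e^{−2g+2f}`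
on any open interval where `Q3 > 0` and `Q4 > 0`. -/
theorem V1_truncation_setA_solution (α β : ℝ)
    (Q3 Q4 : ℝ → ℝ)
    (hQ3 : Q3 = fun t => (4/3) * t^3 + α * t^2 + (α^2/4) * t + β)
    (hQ4 : Q4 = fun t => (4/3) * t^4 + (4/3) * α * t^3 + (α^2/2) * t^2
      + ((α^3 - 16 * β)/8) * t + (α^4 - 32 * α * β)/64)
    (a b : ℝ) (hpos : ∀ t ∈ Set.Ioo a b, 0 < Q3 t ∧ 0 < Q4 t)
    (f g : ℝ → ℝ) (hf : f = fun t => Real.log (Q3 t)) (hg : g = fun t => Real.log (Q4 t)) :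
    ∀ t ∈ Set.Ioo a b,
      (1/4) * deriv (deriv f) t = -Real.exp (g t - 2 * f t) ∧
      (1/4) * deriv (deriv g) t = -Real.exp (-(2 * g t) + 2 * f t) := by
  obtain rfl : Q3 = setAQ3 α β := hQ3
  obtain rfl : Q4 = setAQ4 α β := hQ4
  subst hf hg
  intro t ht
  obtain ⟨h3, h4⟩ := hpos t ht
  have hf'' := deriv_deriv_log_comp (.of_forall (hasDerivAt_setAQ3 α β))
    (hasDerivAt_setAQ3_deriv α t) h3.ne'
  have hg'' := deriv_deriv_log_comp (.of_forall (hasDerivAt_setAQ4 α β))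
    (hasDerivAt_setAQ4_deriv α β t) h4.ne'
  rw [setAQ3_wronskian] at hf''
  rw [setAQ4_wronskian] at hg''
  beta_reduce
  rw [hf'', hg'', neg_add_eq_sub, exp_sub_two_mul_log _ h3, exp_sub_two_mul_log _ h4,
    exp_log h4, exp_two_mul_log h3]
  constructor <;> ring
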